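/- arXiv:1805.00187 — 11 statements merged into one kernel-verified Lean document; each statement's English description precedes it below -/
import Mathlib

section
/- Let K be a field and L a Lie algebra over K. If φ : L → L is a Hom-Lie structure on L and h ∈ L, then the K-linear map x ↦ ⁅φ(x), h⁆ − φ(⁅x, h⁆) is also a Hom-Lie structure on L. (Hence the space of Hom-Lie structures on L is an L-submodule of End_K(L) under the standard action.) -/
/-- If `φ` is a Hom-Lie structure on a Lie algebra `L` over a field `K`
and `h ∈ L`, then `x ↦ ⁅φ x, h⁆ - φ ⁅x, h⁆` is also a Hom-Lie structure on `L`. -/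
theorem homLie_action_stable (K L : Type*) [Field K] [LieRing L] [LieAlgebra K L]
    (φ : L →ₗ[K] L)
    (hφ : ∀ x y z : L, ⁅⁅x, y⁆, φ z⁆ + ⁅⁅z, x⁆, φ y⁆ + ⁅⁅y, z⁆, φ x⁆ = 0)
    (h : L) :
    ∀ x y z : L,
      ⁅⁅x, y⁆, ⁅φ z, h⁆ - φ ⁅z, h⁆⁆ + ⁅⁅z, x⁆, ⁅φ y, h⁆ - φ ⁅y, h⁆⁆ +
        ⁅⁅y, z⁆, ⁅φ x, h⁆ - φ ⁅x, h⁆⁆ = 0 := by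
  intro x y z
  have mk : ∀ a b c : L, ⁅⁅a, b⁆, φ c⁆ + ⁅⁅c, a⁆, φ b⁆ + ⁅⁅b, c⁆, φ a⁆ = 0 →
      ⁅⁅a, b⁆, φ c⁆ = -⁅⁅c, a⁆, φ b⁆ - ⁅⁅b, c⁆, φ a⁆ := by
    intro a b c e
    rw [← sub_eq_zero, ← e]; abel
  have h1 := mk x y ⁅z, h⁆ (hφ x y ⁅z, h⁆)
  have h2 := mk z x ⁅y, h⁆ (hφ z x ⁅y, h⁆)
  have h3 := mk y z ⁅x, h⁆ (hφ y z ⁅x, h⁆)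
  have h0 := mk x y z (hφ x y z)
  have inner : ∀ a b : L, ⁅a, ⁅b, h⁆⁆ + ⁅⁅a, h⁆, b⁆ - ⁅⁅a, b⁆, h⁆ = 0 := by
    intro a b
    rw [leibniz_lie, ← lie_skew b ⁅a, h⁆]; abel
  have key : ∀ a b c : L,
      ⁅⁅a, ⁅b, h⁆⁆, φ c⁆ + ⁅⁅⁅a, h⁆, b⁆, φ c⁆ - ⁅⁅⁅a, b⁆, h⁆, φ c⁆ = 0 := by
    intro a b c
    rw [← add_lie, ← sub_lie, inner a b, zero_lie]
  have skw : ∀ a b c : L, ⁅φ c, ⁅⁅a, b⁆, h⁆⁆ + ⁅⁅⁅a, b⁆, h⁆, φ c⁆ = 0 := by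
    intro a b c
    rw [← lie_skew (φ c) ⁅⁅a, b⁆, h⁆]; abel
  simp only [lie_sub]
  rw [h1, h2, h3, leibniz_lie ⁅x, y⁆ (φ z) h, leibniz_lie ⁅z, x⁆ (φ y) h,
    leibniz_lie ⁅y, z⁆ (φ x) h, h0]
  simp only [sub_lie, add_lie, neg_lie, lie_neg, lie_sub, lie_add]
  linear_combination (norm := abel) key x y z + key z x y + key y z x +
    skw x y z + skw z x y + skw y z x
end

section
/- Let K be a field, L a Lie algebra over K, φ : L → L a K-linear map, and h ∈ L. Define J_φ(x,y,z) = ⁅⁅x,y⁆, φ(z)⁆ + ⁅⁅z,x⁆, φ(y)⁆ + ⁅⁅y,z⁆, φ(x)⁆ and let φ_h denote the linear map x ↦ ⁅φ(x), h⁆ − φ(⁅x, h⁆). Then for all x, y, z ∈ L: J_{φ_h}(x,y,z) = ⁅J_φ(x,y,z), h⁆ − J_φ(⁅x,h⁆, y, z) − J_φ(x, ⁅y,h⁆, z) − J_φ(x, y, ⁅z,h⁆). -/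
private lemma leib1 {L : Type*} [LieRing L] (a b h : L) :
    ⁅⁅a, b⁆, h⁆ = ⁅⁅a, h⁆, b⁆ + ⁅a, ⁅b, h⁆⁆ := by
  rw [lie_lie a b h, ← lie_skew b ⁅a, h⁆]
  abel

/-- The Hom-Jacobian `J_φ(x,y,z) = ⁅⁅x,y⁆, φ z⁆ + ⁅⁅z,x⁆, φ y⁆ + ⁅⁅y,z⁆, φ x⁆`
of a map `φ : L → L` on a Lie algebra `L`. -/
def homJacobian {L : Type*} [LieRing L] (φ : L → L) (x y z : L) : L :=
  ⁅⁅x, y⁆, φ z⁆ + ⁅⁅z, x⁆, φ y⁆ + ⁅⁅y, z⁆, φ x⁆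

/-- For a `K`-linear map `φ : L → L` and `h ∈ L`, with
`φ_h : x ↦ ⁅φ x, h⁆ - φ ⁅x, h⁆`, one has
`J_{φ_h}(x,y,z) = ⁅J_φ(x,y,z), h⁆ - J_φ(⁅x,h⁆,y,z) - J_φ(x,⁅y,h⁆,z) - J_φ(x,y,⁅z,h⁆)`. -/
theorem homJacobian_action (K L : Type*) [Field K] [LieRing L] [LieAlgebra K L]
    (φ : L →ₗ[K] L) (h : L) :
    ∀ x y z : L,
      homJacobian (fun w => ⁅φ w, h⁆ - φ ⁅w, h⁆) x y z =
        ⁅homJacobian (φ : L → L) x y z, h⁆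
          - homJacobian (φ : L → L) ⁅x, h⁆ y z
          - homJacobian (φ : L → L) x ⁅y, h⁆ z
          - homJacobian (φ : L → L) x y ⁅z, h⁆ := by
  intro x y z
  simp only [homJacobian, lie_sub, add_lie]
  rw [leib1 ⁅x, y⁆ (φ z) h, leib1 ⁅z, x⁆ (φ y) h, leib1 ⁅y, z⁆ (φ x) h,
      leib1 x y h, leib1 z x h, leib1 y z h]
  simp only [add_lie]
  abel
end

section
/- Let K be a field of characteristic ≠ 2, 3 and let L be a Lie algebra over K with a basis e₋, h, e₊ satisfying ⁅e₋, h⁆ = −e₋, ⁅e₊, h⁆ = e₊, ⁅e₋, e₊⁆ = h (so L ≅ sl(2)). Then a K-linear map φ : L → L is a Hom-Lie structure on L if and only if ⁅h, φ(h)⁆ + ⁅e₋, φ(e₊)⁆ + ⁅e₊, φ(e₋)⁆ = 0. -/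
/-!
The Hom-Jacobi expression `⁅⁅x, y⁆, φ z⁆ + ⁅⁅z, x⁆, φ y⁆ + ⁅⁅y, z⁆, φ x⁆` is trilinear and
alternating in `(x, y, z)`. On a three-dimensional Lie algebra such a map is a multiple of the
determinant, so it vanishes as soon as it vanishes on the basis triple `(e₋, h, e₊)`, where it equals
`-(⁅h, φ h⁆ + ⁅e₋, φ e₊⁆ + ⁅e₊, φ e₋⁆)`.
-/

theorem AlternatingMap.map_basis_eq_zero_iff' {R M N ι : Type*} [CommRing R]
    [AddCommGroup M] [Module R M] [AddCommGroup N] [Module R N] [Finite ι]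
    (e : Module.Basis ι R M) (f : M [⋀^ι]→ₗ[R] N) : f e = 0 ↔ f = 0 := by
  refine ⟨fun h => ?_, fun h => h ▸ rfl⟩
  cases nonempty_fintype ι
  classical
  refine e.ext_alternating fun v hv => ?_
  let σ : Equiv.Perm ι := Equiv.ofBijective v (Finite.injective_iff_bijective.1 hv)
  change f (e ∘ σ) = 0
  rw [f.map_perm, h, smul_zero]

section HomJacobiator

variable {R L : Type*} [CommRing R] [LieRing L] [LieAlgebra R L] (φ : L →ₗ[R] L)

def homJacobiator : L [⋀^Fin 3]→ₗ[R] L where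
  toFun v := ⁅⁅v 0, v 1⁆, φ (v 2)⁆ + ⁅⁅v 2, v 0⁆, φ (v 1)⁆ + ⁅⁅v 1, v 2⁆, φ (v 0)⁆
  -- The structure fields quantify over an arbitrary `DecidableEq` instance, which blocks the
  -- kernel from evaluating `Function.update` at numerals until it is replaced by the canonical one.
  map_update_add' := by
    intro _ v i x y
    obtain rfl : ‹DecidableEq (Fin 3)› = instDecidableEqFin 3 := Subsingleton.elim _ _
    fin_cases i <;>
      simp only [Fin.zero_eta, Fin.mk_one, Fin.reduceFinMk, Fin.isValue, Function.update_self,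
        ne_eq, Fin.reduceEq, not_false_eq_true, Function.update_of_ne, map_add, lie_add,
        add_lie] <;>
      abel
  map_update_smul' := by
    intro _ v i c x
    obtain rfl : ‹DecidableEq (Fin 3)› = instDecidableEqFin 3 := Subsingleton.elim _ _
    fin_cases i <;> simp [smul_add]
  map_eq_zero_of_eq' v i j hv hij := by
    fin_cases i <;> fin_cases j <;> simp_all

theorem homJacobiator_apply_vecCons (x y z : L) :
    homJacobiator φ ![x, y, z] = ⁅⁅x, y⁆, φ z⁆ + ⁅⁅z, x⁆, φ y⁆ + ⁅⁅y, z⁆, φ x⁆ :=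
  rfl

theorem homJacobiator_eq_zero_iff :
    homJacobiator φ = 0 ↔ ∀ x y z : L, ⁅⁅x, y⁆, φ z⁆ + ⁅⁅z, x⁆, φ y⁆ + ⁅⁅y, z⁆, φ x⁆ = 0 :=
  ⟨fun hJ x y z => by rw [← homJacobiator_apply_vecCons, hJ, AlternatingMap.zero_apply],
    fun hJ => AlternatingMap.ext fun v => hJ (v 0) (v 1) (v 2)⟩

theorem homJacobiator_sl2 {em h ep : L}
    (br1 : ⁅em, h⁆ = -em) (br2 : ⁅ep, h⁆ = ep) (br3 : ⁅em, ep⁆ = h) :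
    homJacobiator φ ![em, h, ep] = -(⁅h, φ h⁆ + ⁅em, φ ep⁆ + ⁅ep, φ em⁆) := by
  rw [homJacobiator_apply_vecCons, br1, ← lie_skew ep em, br3, ← lie_skew h ep, br2]
  simp only [neg_lie]
  abel

end HomJacobiator

theorem homLie_sl2_iff_general (K L : Type*) [Field K] [LieRing L] [LieAlgebra K L]
    (B : Module.Basis (Fin 3) K L) (em h ep : L)
    (hB0 : B 0 = em) (hB1 : B 1 = h) (hB2 : B 2 = ep)
    (br1 : ⁅em, h⁆ = -em) (br2 : ⁅ep, h⁆ = ep) (br3 : ⁅em, ep⁆ = h)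
    (φ : L →ₗ[K] L) :
    (∀ x y z : L, ⁅⁅x, y⁆, φ z⁆ + ⁅⁅z, x⁆, φ y⁆ + ⁅⁅y, z⁆, φ x⁆ = 0) ↔
      ⁅h, φ h⁆ + ⁅em, φ ep⁆ + ⁅ep, φ em⁆ = 0 := by
  have hB : ⇑B = ![em, h, ep] := by
    ext i
    fin_cases i <;> simp [hB0, hB1, hB2]
  rw [← homJacobiator_eq_zero_iff, ← AlternatingMap.map_basis_eq_zero_iff' B, hB,
    homJacobiator_sl2 φ br1 br2 br3, neg_eq_zero]

/-- For `L ≅ sl(2)` over a field of characteristic `≠ 2, 3`, with basis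
`e₋, h, e₊` satisfying `⁅e₋,h⁆ = -e₋`, `⁅e₊,h⁆ = e₊`, `⁅e₋,e₊⁆ = h`, a linear map
`φ : L → L` is a Hom-Lie structure iff `⁅h, φ h⁆ + ⁅e₋, φ e₊⁆ + ⁅e₊, φ e₋⁆ = 0`. -/
theorem homLie_sl2_iff (K L : Type*) [Field K] [LieRing L] [LieAlgebra K L]
    (h2 : (2 : K) ≠ 0) (h3 : (3 : K) ≠ 0)
    (B : Module.Basis (Fin 3) K L) (em h ep : L)
    (hB0 : B 0 = em) (hB1 : B 1 = h) (hB2 : B 2 = ep)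
    (br1 : ⁅em, h⁆ = -em) (br2 : ⁅ep, h⁆ = ep) (br3 : ⁅em, ep⁆ = h)
    (φ : L →ₗ[K] L) :
    (∀ x y z : L, ⁅⁅x, y⁆, φ z⁆ + ⁅⁅z, x⁆, φ y⁆ + ⁅⁅y, z⁆, φ x⁆ = 0) ↔
      ⁅h, φ h⁆ + ⁅em, φ ep⁆ + ⁅ep, φ em⁆ = 0 :=
  homLie_sl2_iff_general K L B em h ep hB0 hB1 hB2 br1 br2 br3 φ
end

section
/- Let K be a field of characteristic ≠ 2, 3 and let L be a Lie algebra over K with a basis e₋, h, e₊ satisfying ⁅e₋, h⁆ = −e₋, ⁅e₊, h⁆ = e₊, ⁅e₋, e₊⁆ = h (so L ≅ sl(2)). Let T : End_K(L) → L be the K-linear map T(φ) = ⁅h, φ(h)⁆ + ⁅e₋, φ(e₊)⁆ + ⁅e₊, φ(e₋)⁆. Then the kernel of T has dimension 6 over K; equivalently, the space of Hom-Lie structures on sl(2) is 6-dimensional. -/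
/-!
`T` is surjective: feeding it the rank-one map `x ↦ (coordinate of x) • v` isolates one bracket
`⁅e, v⁆` with `e ∈ {e₋, h, e₊}`, and since `sl(2)` is perfect (`e₋ = ⁅h, e₋⁆`, `h = ⁅e₋, e₊⁆`,
`e₊ = ⁅e₊, h⁆`) these brackets exhaust `L`. Rank–nullity then gives `9 - 3 = 6`.
-/

open Module LinearMap

theorem LinearMap.finrank_ker_add_finrank_of_range_eq_top {K V W : Type*} [DivisionRing K]
    [AddCommGroup V] [Module K V] [AddCommGroup W] [Module K W] [FiniteDimensional K V]
    {f : V →ₗ[K] W} (hf : range f = ⊤) :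
    finrank K (ker f) + finrank K W = finrank K V := by
  rw [← f.finrank_range_add_finrank_ker, hf, finrank_top, add_comm]

namespace HomLieSl2

variable {K L : Type*} [Field K] [LieRing L] [LieAlgebra K L]
  (B : Basis (Fin 3) K L) {T : (L →ₗ[K] L) →ₗ[K] L}

theorem lie_basis_mem_range
    (hT : ∀ φ : L →ₗ[K] L, T φ = ⁅B 1, φ (B 1)⁆ + ⁅B 0, φ (B 2)⁆ + ⁅B 2, φ (B 0)⁆)
    (i : Fin 3) (v : L) : ⁅B i, v⁆ ∈ range T :=
  ⟨(B.coord (Equiv.swap 0 2 i)).smulRight v, by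
    fin_cases i <;> simp [hT, Equiv.swap_apply_of_ne_of_ne]⟩

theorem range_eq_top
    (hT : ∀ φ : L →ₗ[K] L, T φ = ⁅B 1, φ (B 1)⁆ + ⁅B 0, φ (B 2)⁆ + ⁅B 2, φ (B 0)⁆)
    (br1 : ⁅B 0, B 1⁆ = -B 0) (br2 : ⁅B 2, B 1⁆ = B 2)
    (br3 : ⁅B 0, B 2⁆ = B 1) : range T = ⊤ := by
  refine eq_top_iff.2 (B.span_eq ▸ Submodule.span_le.2 ?_)
  rintro _ ⟨i, rfl⟩
  fin_cases i
  · simpa [← lie_skew (B 1), br1] using lie_basis_mem_range B hT 1 (B 0)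
  · simpa [br3] using lie_basis_mem_range B hT 0 (B 2)
  · simpa [br2] using lie_basis_mem_range B hT 2 (B 1)

end HomLieSl2

theorem homLie_sl2_dim_general (K L : Type*) [Field K] [LieRing L] [LieAlgebra K L]
    (B : Module.Basis (Fin 3) K L) (em h ep : L)
    (hB0 : B 0 = em) (hB1 : B 1 = h) (hB2 : B 2 = ep)
    (br1 : ⁅em, h⁆ = -em) (br2 : ⁅ep, h⁆ = ep) (br3 : ⁅em, ep⁆ = h)
    (T : (L →ₗ[K] L) →ₗ[K] L)
    (hT : ∀ φ : L →ₗ[K] L, T φ = ⁅h, φ h⁆ + ⁅em, φ ep⁆ + ⁅ep, φ em⁆) :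
    Module.finrank K (LinearMap.ker T) = 6 := by
  subst hB0 hB1 hB2
  have : FiniteDimensional K L := .of_basis B
  have hL : finrank K L = 3 := by simp [finrank_eq_card_basis B]
  have hrank := finrank_ker_add_finrank_of_range_eq_top (HomLieSl2.range_eq_top B hT br1 br2 br3)
  rw [finrank_linearMap, hL] at hrank
  omega

/-- For `L ≅ sl(2)` over a field of characteristic `≠ 2, 3`, the kernel of the
linear map `T : End_K(L) → L`, `T φ = ⁅h, φ h⁆ + ⁅e₋, φ e₊⁆ + ⁅e₊, φ e₋⁆`, is
`6`-dimensional; equivalently, the space of Hom-Lie structures on `sl(2)` is `6`-dimensional. -/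
theorem homLie_sl2_dim (K L : Type*) [Field K] [LieRing L] [LieAlgebra K L]
    (h2 : (2 : K) ≠ 0) (h3 : (3 : K) ≠ 0)
    (B : Module.Basis (Fin 3) K L) (em h ep : L)
    (hB0 : B 0 = em) (hB1 : B 1 = h) (hB2 : B 2 = ep)
    (br1 : ⁅em, h⁆ = -em) (br2 : ⁅ep, h⁆ = ep) (br3 : ⁅em, ep⁆ = h)
    (T : (L →ₗ[K] L) →ₗ[K] L)
    (hT : ∀ φ : L →ₗ[K] L, T φ = ⁅h, φ h⁆ + ⁅em, φ ep⁆ + ⁅ep, φ em⁆) :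
    Module.finrank K (LinearMap.ker T) = 6 :=
  homLie_sl2_dim_general K L B em h ep hB0 hB1 hB2 br1 br2 br3 T hT
end

section
/- Let K be a field, L a Lie algebra over K equipped with a symmetric invariant K-bilinear form ⟨·,·⟩ : L × L → K (invariance: ⟨⁅x,y⁆, z⟩ = ⟨x, ⁅y,z⁆⟩ for all x,y,z), let t ∈ L, and let φ : L → L be a Hom-Lie structure on L. Then the bilinear map f_t : L × L → K defined by f_t(x,y) = ⟨φ(y), ⁅x,t⁆⟩ is an asymmetric 2-cocycle on L. -/
/-- If `⟨·,·⟩` is a symmetric invariant bilinear form on a Lie algebra `L`,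
`t ∈ L`, and `φ` is a Hom-Lie structure on `L`, then `f_t(x,y) = ⟨φ y, ⁅x,t⁆⟩` is an
asymmetric 2-cocycle on `L`. -/
theorem homLie_form_cocycle (K L : Type*) [Field K] [LieRing L] [LieAlgebra K L]
    (B : L →ₗ[K] L →ₗ[K] K)
    (hsymm : ∀ x y : L, B x y = B y x)
    (hinv : ∀ x y z : L, B ⁅x, y⁆ z = B x ⁅y, z⁆)
    (t : L) (φ : L →ₗ[K] L)
    (hφ : ∀ x y z : L, ⁅⁅x, y⁆, φ z⁆ + ⁅⁅z, x⁆, φ y⁆ + ⁅⁅y, z⁆, φ x⁆ = 0) :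
    ∀ x y z : L,
      B (φ z) ⁅⁅x, y⁆, t⁆ + B (φ y) ⁅⁅z, x⁆, t⁆ + B (φ x) ⁅⁅y, z⁆, t⁆ = 0 := by
  intro x y z
  have key : ∀ a c : L, B (φ c) ⁅a, t⁆ = - B t ⁅a, φ c⁆ := by
    intro a c
    rw [hsymm, ← lie_skew a t, map_neg, LinearMap.neg_apply, hinv, neg_inj]

  rw [key, key, key, ← neg_add, ← neg_add, ← map_add, ← map_add, hφ]
  simp
end

section
/- Let K be a field, L a Lie algebra over K, and let D, F : L → (L → K) be K-linear maps into the dual space such that D(⁅x,y⁆)(z) = F(x)(⁅y,z⁆) − F(y)(⁅x,z⁆) for all x, y, z ∈ L, and D(x)(y) + F(y)(x) = 0 for all x, y ∈ L. Then the bilinear map (x,y) ↦ D(x)(y) is an asymmetric 2-cocycle on L. (This is the exactness in the middle of the sequence 0 → Z²(L) → QDer(L, L*) → B(L).) -/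
/-- If `D, F : L → L*` are linear maps with
`D(⁅x,y⁆)(z) = F(x)(⁅y,z⁆) - F(y)(⁅x,z⁆)` and `D(x)(y) + F(y)(x) = 0`, then
`(x,y) ↦ D(x)(y)` is an asymmetric 2-cocycle on `L` (exactness in the middle of
`0 → Z²(L) → QDer(L, L*) → B(L)`). -/
theorem quasiderivation_cocycle (K L : Type*) [Field K] [LieRing L] [LieAlgebra K L]
    (D F : L →ₗ[K] (L →ₗ[K] K))
    (hDF : ∀ x y z : L, D ⁅x, y⁆ z = F x ⁅y, z⁆ - F y ⁅x, z⁆)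
    (hB : ∀ x y : L, D x y + F y x = 0) :
    ∀ x y z : L, D ⁅x, y⁆ z + D ⁅z, x⁆ y + D ⁅y, z⁆ x = 0 := by
  intro x y z
  have h1 := hDF x y z
  have h2 := hB ⁅y, z⁆ x
  have h3 := hB ⁅z, x⁆ y
  rw [show (⁅x, z⁆ : L) = -⁅z, x⁆ by rw [← lie_skew], map_neg] at h1
  linear_combination h1 + h2 + h3
end

section
/- Let K be a field, A a commutative associative unital K-algebra, and L a Lie algebra over K. If φ : L → L is a Hom-Lie structure on L and u ∈ A, then the K-linear map (multiplication by u) ⊗ φ on the current Lie algebra A ⊗_K L, i.e., the map sending a ⊗ x to (ua) ⊗ φ(x), is a Hom-Lie structure on A ⊗_K L. -/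
open TensorProduct

/-- If `φ` is a Hom-Lie structure on a Lie algebra `L` over a field `K`, and
`u` is an element of a commutative associative unital `K`-algebra `A`, then
`(multiplication by u) ⊗ φ` is a Hom-Lie structure on the current Lie algebra `A ⊗[K] L`. -/
theorem homLie_current_mul_tensor (K A L : Type*) [Field K] [CommRing A] [Algebra K A]
    [LieRing L] [LieAlgebra K L]
    (φ : L →ₗ[K] L)
    (hφ : ∀ x y z : L, ⁅⁅x, y⁆, φ z⁆ + ⁅⁅z, x⁆, φ y⁆ + ⁅⁅y, z⁆, φ x⁆ = 0)
    (u : A) :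
    ∀ p q r : A ⊗[K] L,
      ⁅⁅p, q⁆, TensorProduct.map (LinearMap.mulLeft K u) φ r⁆ +
        ⁅⁅r, p⁆, TensorProduct.map (LinearMap.mulLeft K u) φ q⁆ +
        ⁅⁅q, r⁆, TensorProduct.map (LinearMap.mulLeft K u) φ p⁆ = 0 := by
  intro p q r
  induction p using TensorProduct.induction_on with
  | zero => simp
  | add p1 p2 h1 h2 =>
    simp only [map_add, lie_add, add_lie, zero_lie, lie_zero]
    linear_combination (norm := module) h1 + h2
  | tmul a x =>
    induction q using TensorProduct.induction_on with
    | zero => simp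
    | add q1 q2 h1 h2 =>
      simp only [map_add, lie_add, add_lie, zero_lie, lie_zero]
      linear_combination (norm := module) h1 + h2
    | tmul b y =>
      induction r using TensorProduct.induction_on with
      | zero => simp
      | add r1 r2 h1 h2 =>
        simp only [map_add, lie_add, add_lie, zero_lie, lie_zero]
        linear_combination (norm := module) h1 + h2
      | tmul c z =>
        simp only [TensorProduct.map_tmul, LinearMap.mulLeft_apply,
          LieAlgebra.ExtendScalars.bracket_tmul]
        rw [show a * b * (u * c) = u * (a * b * c) by ring,
          show c * a * (u * b) = u * (a * b * c) by ring,
          show b * c * (u * a) = u * (a * b * c) by ring,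
          ← TensorProduct.tmul_add, ← TensorProduct.tmul_add, hφ, TensorProduct.tmul_zero]
end

section
/- Let K be a field of characteristic ≠ 2, 3, let A be a commutative associative unital K-algebra, and let L be a finite-dimensional Lie algebra over K. A K-linear map Φ : A ⊗_K L → A ⊗_K L is a Hom-Lie structure on the current Lie algebra A ⊗_K L if and only if Φ lies in the K-linear span of the set of endomorphisms of the following two forms: (i) (multiplication by u) ⊗ φ, where u ∈ A and φ : L → L is a Hom-Lie structure on L; (ii) α ⊗ ψ, where α : A → A is a K-linear map and ψ : L → L is a K-linear map with ⁅⁅x,y⁆, ψ(z)⁆ = 0 for all x, y, z ∈ L. -/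
/-!
The Hom-Jacobi identity for `Φ` at `1 ⊗ x, 1 ⊗ y, 1 ⊗ z`, read along any functional on `A`,
says that every coefficient of `x ↦ Φ (1 ⊗ x) ∈ A ⊗ L` is a Hom-Lie structure on `L`. As `L` is
finite-dimensional, `x ↦ Φ (1 ⊗ x)` therefore comes from an element of `A ⊗ HomLie(L)`, which
yields a combination `Γ` of maps of type (i) with `Γ (a ⊗ x) = a • Φ (1 ⊗ x)`. The identity at
`a ⊗ w, 1 ⊗ x, 1 ⊗ y` shows that `Φ - Γ` takes values in `A ⊗ C`, where `C` is the centralizer of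
`⁅L, L⁆`, and every linear map `A ⊗ L → A ⊗ C` is a finite sum of maps `α ⊗ ψ`. Conversely, maps
of both types satisfy the identity on pure tensors, hence everywhere.
-/

open TensorProduct LinearMap Submodule

section CommRing

variable {R : Type*} [CommRing R]

variable (R) in
def homLie (L : Type*) [LieRing L] [LieAlgebra R L] : Submodule R (Module.End R L) where
  carrier := {φ | ∀ x y z : L, ⁅⁅x, y⁆, φ z⁆ + ⁅⁅z, x⁆, φ y⁆ + ⁅⁅y, z⁆, φ x⁆ = 0}
  add_mem' {φ ψ} hφ hψ x y z := by
    simp only [LinearMap.add_apply, lie_add]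
    linear_combination (norm := module) hφ x y z + hψ x y z
  zero_mem' _ _ _ := by simp
  smul_mem' c φ hφ x y z := by
    simp only [LinearMap.smul_apply, lie_smul]
    linear_combination (norm := module) c • hφ x y z

variable (R) in
def derivedCentralizer (L : Type*) [LieRing L] [LieAlgebra R L] : Submodule R L where
  carrier := {v | ∀ x y : L, ⁅⁅x, y⁆, v⁆ = 0}
  add_mem' hv hw x y := by rw [lie_add, hv x y, hw x y, add_zero]
  zero_mem' _ _ := lie_zero _
  smul_mem' c v hv x y := by rw [lie_smul, hv x y, smul_zero]

section TensorProduct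

variable {M N V W : Type*} [AddCommGroup M] [Module R M] [AddCommGroup N] [Module R N]
  [AddCommGroup V] [Module R V] [AddCommGroup W] [Module R W]

theorem mem_span_map_of_finite [Module.Free R V] [Module.Finite R V] [Module.Free R W]
    [Module.Finite R W] (f : M ⊗[R] V →ₗ[R] N ⊗[R] W) :
    f ∈ span R {P | ∃ (α : M →ₗ[R] N) (ψ : V →ₗ[R] W), P = map α ψ} := by
  classical
  let b := Module.Free.chooseBasis R V
  let c := Module.Free.chooseBasis R W
  let β i k : M →ₗ[R] N :=
    TensorProduct.rid R N ∘ₗ (c.coord k).lTensor N ∘ₗ f ∘ₗ (mk R M V).flip (b i)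
  have hf : f = ∑ i, ∑ k, map (β i k) ((b.coord i).smulRight (c k)) := by
    refine TensorProduct.ext' fun a x => (equivFinsuppOfBasisRight c).injective ?_
    ext k
    conv_lhs => rw [← b.sum_repr x, tmul_sum, map_sum]
    simp [β, equivFinsuppOfBasisRight_apply, Finsupp.single_apply]
  rw [hf]
  exact sum_mem fun i _ => sum_mem fun k _ => subset_span ⟨_, _, rfl⟩

theorem lTensor_applyₗ (s : M ⊗[R] (V →ₗ[R] W)) (x : V) :
    (applyₗ x).lTensor M s = lTensorHomToHomLTensor (RingHom.id R) V M W s x := by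
  induction s <;> simp_all

theorem lid_rTensor_lTensor (χ : Module.Dual R M) (g : V →ₗ[R] W) (m : M ⊗[R] V) :
    TensorProduct.lid R W (χ.rTensor W (g.lTensor M m)) =
      g (TensorProduct.lid R V (χ.rTensor V m)) := by
  induction m <;> simp_all

end TensorProduct

theorem lie_lie_apply_smul_of_mem_homLie {A M : Type*} [CommRing A] [LieRing M]
    [LieAlgebra R M] [LieAlgebra A M] {Φ : Module.End R M} (hΦ : Φ ∈ homLie R M)
    (a : A) (p q r : M) : ⁅⁅q, r⁆, Φ (a • p)⁆ = a • ⁅⁅q, r⁆, Φ p⁆ := by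
  have h₁ := hΦ (a • p) q r
  have h₂ := hΦ p q r
  rw [smul_lie, smul_lie, lie_smul, smul_lie] at h₁
  linear_combination (norm := module) h₁ - a • h₂

section CurrentAlgebra

variable {A L : Type*} [CommRing A] [Algebra R A] [LieRing L] [LieAlgebra R L]

theorem lie_one_tmul_eq_lTensor_ad (w : L) (m : A ⊗[R] L) :
    ⁅(1 : A) ⊗ₜ[R] w, m⁆ = (LieAlgebra.ad R L w).lTensor A m := by
  induction m with
  | zero => simp
  | tmul a v => simp [LieAlgebra.ExtendScalars.bracket_tmul]
  | add p q hp hq => rw [lie_add, map_add, hp, hq]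

theorem lid_rTensor_lie_one_tmul (χ : Module.Dual R A) (w : L) (m : A ⊗[R] L) :
    TensorProduct.lid R L (χ.rTensor L ⁅(1 : A) ⊗ₜ[R] w, m⁆) =
      ⁅w, TensorProduct.lid R L (χ.rTensor L m)⁆ := by
  rw [lie_one_tmul_eq_lTensor_ad, lid_rTensor_lTensor, LieAlgebra.ad_apply]

theorem mem_homLie_of_forall_tmul {Φ : Module.End R (A ⊗[R] L)}
    (h : ∀ (a b c : A) (x y z : L), ⁅⁅a ⊗ₜ[R] x, b ⊗ₜ[R] y⁆, Φ (c ⊗ₜ z)⁆ +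
      ⁅⁅c ⊗ₜ[R] z, a ⊗ₜ[R] x⁆, Φ (b ⊗ₜ y)⁆ + ⁅⁅b ⊗ₜ[R] y, c ⊗ₜ[R] z⁆, Φ (a ⊗ₜ x)⁆ = 0) :
    Φ ∈ homLie R (A ⊗[R] L) := by
  let J p q r := ⁅⁅p, q⁆, Φ r⁆ + ⁅⁅r, p⁆, Φ q⁆ + ⁅⁅q, r⁆, Φ p⁆
  -- `J` is cyclically symmetric, so additivity in the first slot gives additivity in each slot.
  have cyc p q r : J p q r = J r p q := by simp only [J]; abel
  have zero q r : J 0 q r = 0 := by simp [J]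
  have add p p' q r (hp : J p q r = 0) (hp' : J p' q r = 0) : J (p + p') q r = 0 := by
    simp only [J, map_add, lie_add, add_lie] at hp hp' ⊢
    linear_combination (norm := module) hp + hp'
  have h₁ a b x y r : J (a ⊗ₜ x) (b ⊗ₜ y) r = 0 := by
    induction r with
    | zero => rw [cyc]; exact zero _ _
    | tmul c z => exact h a b c x y z
    | add r r' hr hr' => rw [cyc] at hr hr' ⊢; exact add _ _ _ _ hr hr'
  have h₂ a x q r : J (a ⊗ₜ x) q r = 0 := by
    induction q with
    | zero => rw [← cyc]; exact zero _ _
    | tmul b y => exact h₁ a b x y r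
    | add q q' hq hq' => rw [← cyc] at hq hq' ⊢; exact add _ _ _ _ hq hq'
  intro p q r
  induction p with
  | zero => exact zero q r
  | tmul a x => exact h₂ a x q r
  | add p p' hp hp' => exact add _ _ _ _ hp hp'

theorem map_mulLeft_mem_homLie (u : A) {φ : Module.End R L} (hφ : φ ∈ homLie R L) :
    map (mulLeft R u) φ ∈ homLie R (A ⊗[R] L) := by
  refine mem_homLie_of_forall_tmul fun a b c x y z => ?_
  simp only [map_tmul, mulLeft_apply, LieAlgebra.ExtendScalars.bracket_tmul]
  rw [show a * b * (u * c) = u * a * b * c by ring, show c * a * (u * b) = u * a * b * c by ring,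
    show b * c * (u * a) = u * a * b * c by ring, ← tmul_add, ← tmul_add, hφ x y z, tmul_zero]

theorem map_mem_homLie (α : A →ₗ[R] A) {ψ : Module.End R L}
    (hψ : ∀ x y z : L, ⁅⁅x, y⁆, ψ z⁆ = 0) : map α ψ ∈ homLie R (A ⊗[R] L) :=
  mem_homLie_of_forall_tmul fun a b c x y z => by
    simp only [map_tmul, LieAlgebra.ExtendScalars.bracket_tmul, hψ, tmul_zero, add_zero]

theorem lie_one_tmul_lie_sub_apply_eq_zero {Φ Γ : Module.End R (A ⊗[R] L)}
    (hΦ : Φ ∈ homLie R (A ⊗[R] L)) (hΓ : ∀ a x, Γ (a ⊗ₜ x) = a • Φ (1 ⊗ₜ x))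
    (x y : L) (v : A ⊗[R] L) : ⁅(1 : A) ⊗ₜ[R] ⁅x, y⁆, (Φ - Γ) v⁆ = 0 := by
  induction v with
  | zero => simp
  | tmul a w =>
    have hxy : (1 : A) ⊗ₜ[R] ⁅x, y⁆ = ⁅(1 : A) ⊗ₜ[R] x, (1 : A) ⊗ₜ[R] y⁆ := by
      rw [LieAlgebra.ExtendScalars.bracket_tmul, one_mul]
    have haw : a ⊗ₜ[R] w = a • (1 : A) ⊗ₜ[R] w := by rw [smul_tmul', smul_eq_mul, mul_one]
    rw [LinearMap.sub_apply, hΓ, haw, lie_sub, lie_smul, hxy,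
      lie_lie_apply_smul_of_mem_homLie hΦ, sub_self]
  | add v v' hv hv' => rw [map_add, lie_add, hv, hv', add_zero]

end CurrentAlgebra

end CommRing

section Field

variable {K : Type*} [Field K]

theorem mem_range_lTensor_subtype_of_forall_dual {A V : Type*} [AddCommGroup A] [Module K A]
    [AddCommGroup V] [Module K V] {U : Submodule K V} {m : A ⊗[K] V}
    (h : ∀ χ : Module.Dual K A, TensorProduct.lid K V (χ.rTensor V m) ∈ U) :
    m ∈ range (U.subtype.lTensor A) := by
  classical
  let e := Module.Free.chooseBasis K A
  refine (Module.Flat.lTensor_exact A (LinearMap.exact_subtype_mkQ U) m).mp <|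
    (equivFinsuppOfBasisLeft e).injective <| Finsupp.ext fun i => ?_
  rw [equivFinsuppOfBasisLeft_apply, lid_rTensor_lTensor, map_zero, Finsupp.zero_apply,
    mkQ_apply, Quotient.mk_eq_zero]
  exact h _

theorem mem_span_map_of_forall_mem_range_lTensor {M N V W : Type*} [AddCommGroup M] [Module K M]
    [AddCommGroup N] [Module K N] [AddCommGroup V] [Module K V] [Module.Finite K V]
    [AddCommGroup W] [Module K W] (U : Submodule K W) [Module.Finite K U]
    (f : M ⊗[K] V →ₗ[K] N ⊗[K] W) (hf : ∀ v, f v ∈ range (U.subtype.lTensor N)) :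
    f ∈ span K {P | ∃ (α : M →ₗ[K] N) (ψ : V →ₗ[K] W), (∀ v, ψ v ∈ U) ∧ P = map α ψ} := by
  obtain ⟨g, hg⟩ := (U.subtype.lTensor N).exists_leftInverse_of_injective <| ker_eq_bot.mpr <|
    Module.Flat.lTensor_preserves_injective_linearMap _ U.injective_subtype
  have hfg : f = U.subtype.lTensor N ∘ₗ g ∘ₗ f := LinearMap.ext fun v => by
    obtain ⟨y, hy⟩ := hf v
    rw [comp_apply, comp_apply, ← hy, ← comp_apply g, hg, id_apply]
  rw [hfg]
  refine span_mono ?_ <| apply_mem_span_image_of_mem_span (llcomp K _ _ _ (U.subtype.lTensor N))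
    (mem_span_map_of_finite (g ∘ₗ f))
  rintro _ ⟨_, ⟨α, ψ, rfl⟩, rfl⟩
  exact ⟨α, U.subtype ∘ₗ ψ, fun v => (ψ v).2, lTensor_comp_map _ _ _ _⟩

variable {A L : Type*} [CommRing A] [Algebra K A] [LieRing L] [LieAlgebra K L] [Module.Finite K L]

theorem exists_mem_span_map_mulLeft {Φ : Module.End K (A ⊗[K] L)}
    (hΦ : Φ ∈ homLie K (A ⊗[K] L)) :
    ∃ Γ ∈ span K {P | ∃ (u : A) (φ : Module.End K L), φ ∈ homLie K L ∧ P = map (mulLeft K u) φ},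
      ∀ a x, Γ (a ⊗ₜ x) = a • Φ (1 ⊗ₜ x) := by
  obtain ⟨t, ht⟩ := (lTensorHomEquivHomLTensor K L A L).surjective (Φ ∘ₗ mk K A L 1)
  have happly (x : L) : (applyₗ x).lTensor A t = Φ (1 ⊗ₜ x) := by
    rw [lTensor_applyₗ, ← lTensorHomEquivHomLTensor_apply, ht]
    rfl
  have hmem : t ∈ range ((homLie K L).subtype.lTensor A) := by
    refine mem_range_lTensor_subtype_of_forall_dual fun χ x y z => ?_
    have hslice (w : L) : TensorProduct.lid K _ (χ.rTensor _ t) w =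
        TensorProduct.lid K L (χ.rTensor L (Φ (1 ⊗ₜ w))) := by
      rw [← happly, lid_rTensor_lTensor, applyₗ_apply_apply]
    have hJ := hΦ (1 ⊗ₜ x) (1 ⊗ₜ y) (1 ⊗ₜ z)
    simp only [LieAlgebra.ExtendScalars.bracket_tmul, one_mul] at hJ
    simp only [hslice, ← lid_rTensor_lie_one_tmul, ← map_add, hJ, map_zero]
  obtain ⟨s, rfl⟩ := hmem
  obtain ⟨S, rfl⟩ := exists_finset s
  refine ⟨∑ i ∈ S, map (mulLeft K i.1) i.2,
    sum_mem fun i _ => subset_span ⟨i.1, i.2, i.2.2, rfl⟩, fun a x => ?_⟩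
  rw [← happly]
  simp [Finset.smul_sum, smul_tmul', mul_comm]

theorem mem_span_map_of_lie_one_tmul_lie_eq_zero {Ψ : Module.End K (A ⊗[K] L)}
    (h : ∀ (x y : L) v, ⁅(1 : A) ⊗ₜ[K] ⁅x, y⁆, Ψ v⁆ = 0) :
    Ψ ∈ span K {P | ∃ (α : A →ₗ[K] A) (ψ : Module.End K L),
      (∀ x y z : L, ⁅⁅x, y⁆, ψ z⁆ = 0) ∧ P = map α ψ} := by
  have hrange (v : A ⊗[K] L) : Ψ v ∈ range ((derivedCentralizer K L).subtype.lTensor A) :=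
    mem_range_lTensor_subtype_of_forall_dual fun χ x y => by
      rw [← lid_rTensor_lie_one_tmul, h, map_zero, map_zero]
  refine span_mono ?_ (mem_span_map_of_forall_mem_range_lTensor _ Ψ hrange)
  rintro P ⟨α, ψ, hψ, rfl⟩
  exact ⟨α, ψ, fun x y z => hψ z x y, rfl⟩

end Field

theorem homLie_current_description_general (K A L : Type*) [Field K] [CommRing A] [Algebra K A]
    [LieRing L] [LieAlgebra K L] [Module.Finite K L]
    (Φ : A ⊗[K] L →ₗ[K] A ⊗[K] L) :
    (∀ p q r : A ⊗[K] L, ⁅⁅p, q⁆, Φ r⁆ + ⁅⁅r, p⁆, Φ q⁆ + ⁅⁅q, r⁆, Φ p⁆ = 0) ↔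
      Φ ∈ Submodule.span K
        { P : A ⊗[K] L →ₗ[K] A ⊗[K] L |
          (∃ (u : A) (φ : L →ₗ[K] L),
            (∀ x y z : L, ⁅⁅x, y⁆, φ z⁆ + ⁅⁅z, x⁆, φ y⁆ + ⁅⁅y, z⁆, φ x⁆ = 0) ∧
            P = TensorProduct.map (LinearMap.mulLeft K u) φ) ∨
          (∃ (α : A →ₗ[K] A) (ψ : L →ₗ[K] L),
            (∀ x y z : L, ⁅⁅x, y⁆, ψ z⁆ = 0) ∧
            P = TensorProduct.map α ψ) } := by
  constructor
  · intro hΦ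
    obtain ⟨Γ, hΓ, hΓΦ⟩ := exists_mem_span_map_mulLeft hΦ
    have hΨ := mem_span_map_of_lie_one_tmul_lie_eq_zero
      (lie_one_tmul_lie_sub_apply_eq_zero hΦ hΓΦ · · ·)
    rw [← add_sub_cancel Γ Φ]
    exact add_mem (span_mono (fun P => Or.inl) hΓ) (span_mono (fun P => Or.inr) hΨ)
  · refine fun hΦ => (span_le (p := homLie K (A ⊗[K] L))).mpr ?_ hΦ
    rintro P (⟨u, φ, hφ, rfl⟩ | ⟨α, ψ, hψ, rfl⟩)
    exacts [map_mulLeft_mem_homLie u hφ, map_mem_homLie α hψ]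

/-- For a field `K` of characteristic `≠ 2, 3`, a commutative associative unital
`K`-algebra `A`, and a finite-dimensional Lie algebra `L` over `K`, Hom-Lie structures on the
current Lie algebra `A ⊗[K] L` are exactly the linear span of maps of the form
`(multiplication by u) ⊗ φ` with `φ` Hom-Lie on `L`, and `α ⊗ ψ` with `α` arbitrary and
`⁅⁅L,L⁆, ψ(L)⁆ = 0`. -/
theorem homLie_current_description (K A L : Type*) [Field K] [CommRing A] [Algebra K A]
    [LieRing L] [LieAlgebra K L] [Module.Finite K L]
    (h2 : (2 : K) ≠ 0) (h3 : (3 : K) ≠ 0)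
    (Φ : A ⊗[K] L →ₗ[K] A ⊗[K] L) :
    (∀ p q r : A ⊗[K] L, ⁅⁅p, q⁆, Φ r⁆ + ⁅⁅r, p⁆, Φ q⁆ + ⁅⁅q, r⁆, Φ p⁆ = 0) ↔
      Φ ∈ Submodule.span K
        { P : A ⊗[K] L →ₗ[K] A ⊗[K] L |
          (∃ (u : A) (φ : L →ₗ[K] L),
            (∀ x y z : L, ⁅⁅x, y⁆, φ z⁆ + ⁅⁅z, x⁆, φ y⁆ + ⁅⁅y, z⁆, φ x⁆ = 0) ∧
            P = TensorProduct.map (LinearMap.mulLeft K u) φ) ∨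
          (∃ (α : A →ₗ[K] A) (ψ : L →ₗ[K] L),
            (∀ x y z : L, ⁅⁅x, y⁆, ψ z⁆ = 0) ∧
            P = TensorProduct.map α ψ) } :=
  homLie_current_description_general K A L Φ
end

section
/- Let K be a field, L a Lie algebra over K, and λ : L → K a nonzero K-linear functional satisfying λ(z)⁅x,y⁆ + λ(y)⁅z,x⁆ + λ(x)⁅y,z⁆ = 0 for all x, y, z ∈ L. Then the kernel of λ is an abelian Lie subalgebra of codimension 1 in L: for all x, y ∈ L with λ(x) = 0 and λ(y) = 0, one has ⁅x, y⁆ = 0. In particular, if L has no abelian subalgebra of codimension 1, then every linear functional λ on L satisfying this cyclic identity is zero. -/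
/-- If `λ : L → K` is a nonzero linear functional with
`λ(z)⁅x,y⁆ + λ(y)⁅z,x⁆ + λ(x)⁅y,z⁆ = 0` for all `x, y, z`, then its kernel is an abelian
subalgebra (of codimension 1): elements of `ker λ` commute. -/
theorem cyclic_functional_ker_abelian (K L : Type*) [Field K] [LieRing L] [LieAlgebra K L]
    (lam : L →ₗ[K] K) (hne : lam ≠ 0)
    (hcyc : ∀ x y z : L, lam z • ⁅x, y⁆ + lam y • ⁅z, x⁆ + lam x • ⁅y, z⁆ = 0) :
    ∀ x y : L, lam x = 0 → lam y = 0 → ⁅x, y⁆ = 0 := by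
  intro x y hx hy
  obtain ⟨z, hz⟩ : ∃ z, lam z ≠ 0 := by
    by_contra h
    push_neg at h
    exact hne (LinearMap.ext fun w => by simpa using h w)
  have := hcyc x y z
  rw [hx, hy, zero_smul, zero_smul, add_zero, add_zero] at this
  exact (smul_eq_zero.mp this).resolve_left hz
end

section
/- Let K be a field of characteristic ≠ 2, 3, let A be a commutative associative unital K-algebra which is an integral domain, and let D : A → A be a K-linear derivation (D(ab) = aD(b) + D(a)b) whose image is not contained in any 1-dimensional K-subspace of A (i.e., there is no v ∈ A such that every D(a) is a K-scalar multiple of v). If α : A → A is a K-linear map and β : A → K is a K-linear functional such that ab·α(c) + ca·α(b) + bc·α(a) + β(c)·D(ab) + β(b)·D(ca) + β(a)·D(bc) = 0 for all a, b, c ∈ A, then α = 0 and β = 0. -/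
/-- Let `A` be a commutative associative unital algebra without zero divisors
over a field `K` of characteristic `≠ 2, 3`, and `D` a `K`-linear derivation of `A` whose
image is not contained in a 1-dimensional subspace. If a linear map `α : A → A` and a linear
functional `β : A → K` satisfy
`ab·α(c) + ca·α(b) + bc·α(a) + β(c)·D(ab) + β(b)·D(ca) + β(a)·D(bc) = 0`
for all `a, b, c ∈ A`, then `α = 0` and `β = 0`. -/
theorem derivation_coefficient_vanishing (K A : Type*) [Field K] [CommRing A] [IsDomain A]
    [Algebra K A]
    (h2 : (2 : K) ≠ 0) (h3 : (3 : K) ≠ 0)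
    (D : A →ₗ[K] A)
    (hD : ∀ a b : A, D (a * b) = a * D b + D a * b)
    (hDim : ¬∃ v : A, ∀ a : A, ∃ c : K, D a = c • v)
    (α : A →ₗ[K] A) (β : A →ₗ[K] K)
    (heq : ∀ a b c : A,
      a * b * α c + c * a * α b + b * c * α a +
        β c • D (a * b) + β b • D (c * a) + β a • D (b * c) = 0) :
    α = 0 ∧ β = 0 := by
  have hφ : Function.Injective (algebraMap K A) := (algebraMap K A).injective
  have hD1 : D 1 = 0 := by simpa using hD 1 1
  -- α 1 = 0
  have hα1 : α 1 = 0 := by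
    have h := heq 1 1 1
    simp [hD1] at h
    have h3' : (3 : K) • α 1 = 0 := by
      rw [show (3 : K) = 1 + 1 + 1 by norm_num, add_smul, add_smul, one_smul]
      linear_combination (norm := abel) h
    rcases smul_eq_zero.mp h3' with h' | h'
    · exact absurd h' h3
    · exact h'
  -- α a = -(2 β 1) • D a
  have hkey : ∀ a : A, α a = -(β 1 • D a + β 1 • D a) := by
    intro a
    have h := heq a 1 1
    simp only [mul_one, one_mul, hα1, mul_zero, hD1, smul_zero, add_zero, zero_add] at h
    linear_combination (norm := abel) h
  -- the key bilinear identity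
  have hγ : ∀ a b : A, (algebraMap K A (β a) - β 1 • a) * D b
      + (algebraMap K A (β b) - β 1 • b) * D a = 0 := by
    intro a b
    have h := heq a b 1
    simp only [mul_one, one_mul, hα1, mul_zero, hD1, smul_zero, add_zero, zero_add,
      hD a b, hkey a, hkey b] at h
    simp only [Algebra.smul_def] at h ⊢
    linear_combination h
  set g : A → A := fun a => algebraMap K A (β a) - β 1 • a with hg
  have hgD : ∀ a : A, g a * D a = 0 := by
    intro a
    have h := hγ a a
    have h2A : (2 : A) ≠ 0 := by
      intro h
      apply h2
      apply hφ
      rw [map_ofNat, map_zero, h]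
    have : (2 : A) * (g a * D a) = 0 := by linear_combination h
    exact (mul_eq_zero.mp this).resolve_left h2A
  -- D is not identically 0
  have hDne : ∃ b : A, D b ≠ 0 := by
    by_contra hc
    push_neg at hc
    exact hDim ⟨0, fun a => ⟨0, by simp [hc a]⟩⟩
  obtain ⟨b, hb⟩ := hDne
  have hgb : g b = 0 := (mul_eq_zero.mp (hgD b)).resolve_right hb
  have hgall : ∀ a : A, g a = 0 := by
    intro a
    have h := hγ a b
    rw [show (algebraMap K A (β b) - β 1 • b) = g b from rfl, hgb, zero_mul, add_zero] at h
    exact (mul_eq_zero.mp h).resolve_right hb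
  -- β 1 = 0
  have hβ1 : β 1 = 0 := by
    by_contra hne
    apply hb
    have ha : ∀ a : A, a = (β a * (β 1)⁻¹) • (1 : A) := by
      intro a
      have h := hgall a
      have : β 1 • a = algebraMap K A (β a) := by
        have := sub_eq_zero.mp (by simpa [hg] using h)
        linear_combination -this
      have h2 : ((β 1)⁻¹ * β 1) • a = (β 1)⁻¹ • algebraMap K A (β a) := by
        rw [mul_smul, this]
      rw [inv_mul_cancel₀ hne, one_smul] at h2
      rw [Algebra.algebraMap_eq_smul_one, ← mul_smul, mul_comm (β 1)⁻¹] at h2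
      exact h2
    calc D b = D ((β b * (β 1)⁻¹) • (1 : A)) := by rw [← ha b]
      _ = (β b * (β 1)⁻¹) • D 1 := by rw [map_smul]
      _ = 0 := by rw [hD1, smul_zero]
  have hβ : ∀ a : A, β a = 0 := by
    intro a
    have h := hgall a
    simp only [hg, hβ1, zero_smul, sub_zero] at h
    have : algebraMap K A (β a) = algebraMap K A 0 := by simpa using h
    exact hφ this
  refine ⟨?_, ?_⟩
  · ext a
    simp [hkey a, hβ1]
  · ext a
    simp [hβ a]
end

section
/- Let K be a field and let L be the 2-dimensional nonabelian Lie algebra over K, with basis x, y satisfying ⁅x, y⁆ = x. A K-linear map ψ : L → L satisfies ⁅⁅a, b⁆, ψ(c)⁆ = 0 for all a, b, c ∈ L if and only if the image of ψ is contained in the line K·x, i.e., for every w ∈ L there exists c ∈ K with ψ(w) = c·x. -/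
/-!
With `⁅x, y⁆ = x` the bracket is `⁅a, b⁆ = det(a, b) • x`, so the derived algebra is `K ∙ x`,
and `⁅x, v⁆ = (y-coordinate of v) • x` shows that `K ∙ x` is its own centralizer. Hence
`⁅⁅a, b⁆, ψ c⁆ = 0` for all `a, b, c` says exactly that `ψ` takes values in `K ∙ x`.
-/

namespace Module.Basis

theorem det_fin_two_apply {R M : Type*} [CommRing R] [AddCommGroup M] [Module R M]
    (B : Basis (Fin 2) R M) (a b : M) :
    B.det ![a, b] = B.repr a 0 * B.repr b 1 - B.repr b 0 * B.repr a 1 := by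
  rw [Basis.det_apply, Matrix.det_fin_two]
  simp [Basis.toMatrix_apply]

variable {R L : Type*} [CommRing R] [LieRing L] [LieAlgebra R L]

theorem lie_eq_det_smul (B : Basis (Fin 2) R L) (hB : ⁅B 0, B 1⁆ = B 0) (a b : L) :
    ⁅a, b⁆ = B.det ![a, b] • B 0 := by
  have hBB : ⁅B 1, B 0⁆ = -B 0 := by rw [← lie_skew, hB]
  conv_lhs => rw [← B.sum_repr a, ← B.sum_repr b]
  simp only [Fin.sum_univ_two, lie_add, add_lie, lie_smul, smul_lie, lie_self, smul_zero, hB, hBB,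
    det_fin_two_apply]
  module

theorem lie_basis_zero_eq_zero_iff (B : Basis (Fin 2) R L) (hB : ⁅B 0, B 1⁆ = B 0) (v : L) :
    ⁅B 0, v⁆ = 0 ↔ ∃ c : R, v = c • B 0 := by
  refine ⟨fun h ↦ ⟨B.repr v 0, ?_⟩, fun ⟨c, hc⟩ ↦ by rw [hc, lie_smul, lie_self, smul_zero]⟩
  have hv1 : B.repr v 1 = 0 := by
    simpa [lie_eq_det_smul B hB, det_fin_two_apply] using congrArg (B.repr · 0) h
  calc v = ∑ i, B.repr v i • B i := (B.sum_repr v).symm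
    _ = B.repr v 0 • B 0 := by rw [Fin.sum_univ_two, hv1, zero_smul, add_zero]

end Module.Basis

/-- On the 2-dimensional nonabelian Lie algebra (basis `x, y` with
`⁅x, y⁆ = x`), a linear map `ψ` is Hom-2-nilpotent (`⁅⁅a,b⁆, ψ c⁆ = 0` for all `a, b, c`)
iff its image is contained in the line `K·x`. -/
theorem hom2Nilpotent_two_dim_nonabelian (K L : Type*) [Field K] [LieRing L] [LieAlgebra K L]
    (B : Module.Basis (Fin 2) K L) (x y : L)
    (hB0 : B 0 = x) (hB1 : B 1 = y)
    (hxy : ⁅x, y⁆ = x)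
    (ψ : L →ₗ[K] L) :
    (∀ a b c : L, ⁅⁅a, b⁆, ψ c⁆ = 0) ↔ ∀ w : L, ∃ c : K, ψ w = c • x := by
  subst hB0 hB1
  constructor
  · intro h w
    rw [← B.lie_basis_zero_eq_zero_iff hxy, ← hxy]
    exact h _ _ w
  · intro h a b c
    obtain ⟨d, hd⟩ := h c
    rw [hd, B.lie_eq_det_smul hxy a b, smul_lie, lie_smul, lie_self, smul_zero, smul_zero]
end
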